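/- arXiv:1801.09976 — 4 statements merged into one kernel-verified Lean document; each statement's English description precedes it below -/
import Mathlib

section
/- Let A be a Noetherian commutative ring, g ∈ A[x_1, …, x_n] a polynomial of total degree d, and let 𝔭 ⊆ 𝔓 be prime ideals of A. If the image of g in Q(A/𝔭)[x_1, …, x_n] has total degree strictly smaller than d, or becomes reducible over a finite extension field of Q(A/𝔭), then the image of g in Q(A/𝔓)[x_1, …, x_n] has total degree strictly smaller than d, or is reducible over a finite extension field of Q(A/𝔓). -/
/-! Work over a field `L` in which the image of `g` factors as `a * b`. Since
`ker (A → L) = 𝔭 ⊆ 𝔓`, some valuation ring `V` of `L` dominates the localization `A_𝔓`, so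
`Q(A/𝔓)` embeds into the residue field `κ` of `V`. Rescaling `a` and `b` by coefficients of
maximal valuation puts them in `V[x]` with nonzero reductions, and Gauss's lemma turns the
factorization of `g` over `V` into one over `κ` whose factors have degrees at most those of
`a` and `b`. Zariski's lemma moves it to a finite extension of `Q(A/𝔓)`. If the image of `g`
over `Q(A/𝔓)` still has degree at least `d ≥ deg a + deg b`, the new factors are nonconstant. -/

universe u

/-- A multivariate polynomial is reducible if it is a product of two non-units. -/
def MvPolyReducible {σ : Type*} {R : Type*} [CommRing R] (g : MvPolynomial σ R) : Prop :=
  ∃ a b : MvPolynomial σ R, g = a * b ∧ ¬IsUnit a ∧ ¬IsUnit b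

/-- The image of `g ∈ A[x₁,…,xₙ]` in `L[x₁,…,xₙ]`, where `L` is an extension field of the
fraction field `Q(A/𝔭)` of the quotient by a prime ideal `𝔭`. -/
noncomputable def reduceTo {A : Type u} [CommRing A] {n : ℕ} (p : Ideal A) [p.IsPrime]
    (L : Type u) [Field L] [Algebra (FractionRing (A ⧸ p)) L]
    (g : MvPolynomial (Fin n) A) : MvPolynomial (Fin n) L :=
  MvPolynomial.map
    ((algebraMap (FractionRing (A ⧸ p)) L).comp
      ((algebraMap (A ⧸ p) (FractionRing (A ⧸ p))).comp (Ideal.Quotient.mk p))) g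

open MvPolynomial

namespace MvPolynomial

variable {σ R S₁ S₂ : Type*} [CommRing R] [CommRing S₁] [CommRing S₂]

theorem support_map_subset_of_ker_le {f₁ : R →+* S₁} {f₂ : R →+* S₂}
    (h : RingHom.ker f₁ ≤ RingHom.ker f₂) (g : MvPolynomial σ R) :
    (map f₂ g).support ⊆ (map f₁ g).support := fun m hm => by
  rw [mem_support_iff, coeff_map] at hm ⊢
  exact fun h₁ => hm (h h₁)

theorem map_eq_zero_of_ker_le {f₁ : R →+* S₁} {f₂ : R →+* S₂}
    (h : RingHom.ker f₁ ≤ RingHom.ker f₂) {g : MvPolynomial σ R} (hg : map f₁ g = 0) :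
    map f₂ g = 0 := by
  ext m
  rw [coeff_map, coeff_zero]
  exact h (by rw [RingHom.mem_ker, ← coeff_map, hg, coeff_zero])

theorem totalDegree_map_le_of_ker_le {f₁ : R →+* S₁} {f₂ : R →+* S₂}
    (h : RingHom.ker f₁ ≤ RingHom.ker f₂) (g : MvPolynomial σ R) :
    (map f₂ g).totalDegree ≤ (map f₁ g).totalDegree :=
  Finset.sup_mono (support_map_subset_of_ker_le h g)

theorem totalDegree_map_le (f : R →+* S₁) (g : MvPolynomial σ R) :
    (map f g).totalDegree ≤ g.totalDegree :=
  Finset.sup_mono (support_map_subset f g)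

theorem totalDegree_map_of_injective {f : R →+* S₁} (hf : Function.Injective f)
    (g : MvPolynomial σ R) : (map f g).totalDegree = g.totalDegree := by
  classical
  rw [totalDegree, support_map_of_injective g hf, totalDegree]

theorem totalDegree_pos_of_not_isUnit {K : Type*} [Field K] {f : MvPolynomial σ K}
    (hf : f ≠ 0) (hu : ¬IsUnit f) : 0 < f.totalDegree := by
  refine Nat.pos_of_ne_zero fun h0 => hu ?_
  rw [totalDegree_eq_zero_iff_eq_C] at h0
  have hc : coeff 0 f ≠ 0 := fun hc => hf (by rw [h0, hc, C_0])
  rw [h0]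
  exact (isUnit_iff_ne_zero.mpr hc).map C

theorem exists_eq_C_mul_of_map_eq_C_mul {O K : Type*} [CommRing O] [IsLocalRing O] [CommRing K]
    {ι : O →+* K} (hι : Function.Injective ι) {F G : MvPolynomial σ O} {c : K}
    (hG : map (IsLocalRing.residue O) G ≠ 0) (h : map ι F = C c * map ι G) :
    ∃ t : O, F = C t * G := by
  -- a coefficient of `G` is a unit, and comparing it with the same coefficient of `F` gives `c`
  obtain ⟨m, hm⟩ := ne_zero_iff.mp hG
  rw [coeff_map, IsLocalRing.residue_ne_zero_iff_isUnit] at hm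
  have hc : ι (F.coeff m) = c * ι (G.coeff m) := by
    rw [← coeff_map, h, coeff_C_mul, coeff_map]
  refine ⟨F.coeff m * ↑hm.unit⁻¹, map_injective ι hι ?_⟩
  have hinv : ι (G.coeff m) * ι ↑hm.unit⁻¹ = 1 := by
    rw [← map_mul, hm.mul_val_inv, map_one]
  rw [h, map_mul, map_C, map_mul, hc, mul_assoc, hinv, mul_one]

end MvPolynomial

section Reducible

variable {σ R : Type*} [CommRing R]

theorem mvPolyReducible_zero [Nontrivial R] : MvPolyReducible (0 : MvPolynomial σ R) :=
  ⟨0, 0, (mul_zero 0).symm, not_isUnit_zero, not_isUnit_zero⟩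

theorem mvPolyReducible_of_eq_mul [IsReduced R] {f α β : MvPolynomial σ R} {i j : ℕ}
    (h : f = α * β) (hα : α.totalDegree ≤ i) (hβ : β.totalDegree ≤ j)
    (hf : i + j ≤ f.totalDegree) (hi : 0 < i) (hj : 0 < j) : MvPolyReducible f := by
  have hmul : f.totalDegree ≤ α.totalDegree + β.totalDegree := h ▸ totalDegree_mul α β
  have not_isUnit {γ : MvPolynomial σ R} (hγ : 0 < γ.totalDegree) : ¬IsUnit γ := fun hu =>
    hγ.ne' (isUnit_iff_totalDegree_of_isReduced.mp hu).2
  exact ⟨α, β, h, not_isUnit (by omega), not_isUnit (by omega)⟩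

end Reducible

section Reduction

variable {A : Type u} [CommRing A] (p : Ideal A) [p.IsPrime]

noncomputable def reduceHom (L : Type u) [Field L] [Algebra (FractionRing (A ⧸ p)) L] :
    A →+* L :=
  (algebraMap (FractionRing (A ⧸ p)) L).comp
    ((algebraMap (A ⧸ p) (FractionRing (A ⧸ p))).comp (Ideal.Quotient.mk p))

variable (L : Type u) [Field L] [Algebra (FractionRing (A ⧸ p)) L]

theorem reduceTo_eq_map {n : ℕ} (g : MvPolynomial (Fin n) A) :
    reduceTo p L g = map (reduceHom p L) g := rfl

theorem ker_reduceHom : RingHom.ker (reduceHom p L) = p := by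
  ext x
  simp [reduceHom, Ideal.Quotient.eq_zero_iff_mem]

theorem reduceTo_eq_map_reduceTo {n : ℕ} (g : MvPolynomial (Fin n) A) :
    reduceTo p L g =
      map (algebraMap (FractionRing (A ⧸ p)) L) (reduceTo p (FractionRing (A ⧸ p)) g) := by
  rw [reduceTo_eq_map, reduceTo_eq_map, map_map]
  rfl

theorem exists_comp_reduceHom_eq {κ : Type*} [Field κ] (ψ : A →+* κ)
    (h : RingHom.ker ψ = p) :
    ∃ ω : FractionRing (A ⧸ p) →+* κ, ω.comp (reduceHom p (FractionRing (A ⧸ p))) = ψ := by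
  subst h
  refine ⟨IsFractionRing.lift (RingHom.kerLift_injective ψ), RingHom.ext fun x => ?_⟩
  simp [reduceHom, IsFractionRing.lift_algebraMap]

end Reduction

theorem exists_valuationSubring_ker_residue_eq {A K : Type*} [CommRing A] [Field K]
    (ρ : A →+* K) (P : Ideal A) [P.IsPrime] (hP : RingHom.ker ρ ≤ P) :
    ∃ (V : ValuationSubring K) (φ : A →+* V),
      V.subtype.comp φ = ρ ∧ RingHom.ker ((IsLocalRing.residue V).comp φ) = P := by
  -- `ρ` extends to `A_P`, and some valuation subring of `K` dominates the image of this local ring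
  have hunit (s : P.primeCompl) : IsUnit (ρ s) := isUnit_iff_ne_zero.mpr fun h => s.2 (hP h)
  let f := IsLocalization.lift (S := Localization.AtPrime P) hunit
  obtain ⟨V, hV, hloc⟩ := IsLocalRing.exists_factor_valuationRing f
  refine ⟨V, (f.codRestrict V.toSubring hV).comp (algebraMap A _), ?_, ?_⟩
  · ext x
    exact IsLocalization.lift_eq hunit x
  · ext x
    rw [RingHom.mem_ker, RingHom.comp_apply, RingHom.comp_apply, ← not_ne_iff,
      IsLocalRing.residue_ne_zero_iff_isUnit, isUnit_map_iff,
      IsLocalization.AtPrime.isUnit_to_map_iff _ P, Ideal.mem_primeCompl_iff, not_not]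

namespace ValuationSubring

open IsLocalRing

variable {K σ : Type*} [Field K] (V : ValuationSubring K)

theorem exists_eq_C_mul_map_subtype {a : MvPolynomial σ K} (ha : a ≠ 0) :
    ∃ (c : K) (a₀ : MvPolynomial σ V), a = C c * map V.subtype a₀ ∧
      a₀.totalDegree ≤ a.totalDegree ∧ map (residue V) a₀ ≠ 0 := by
  -- `c` is a coefficient of `a` of maximal valuation
  obtain ⟨m₀, hm₀, hmax⟩ := Finset.exists_max_image a.support
    (fun m => V.valuation (a.coeff m)) (support_nonempty.mpr ha)
  have hc : a.coeff m₀ ≠ 0 := mem_support_iff.mp hm₀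
  have hcoeff (m) : (C (a.coeff m₀)⁻¹ * a).coeff m ∈ Set.range V.subtype := by
    rw [coeff_C_mul]
    by_cases hm : a.coeff m = 0
    · exact ⟨0, by rw [map_zero, hm, mul_zero]⟩
    obtain ⟨s, hs⟩ := (V.valuation_le_iff _ _).mp (hmax m (mem_support_iff.mpr hm))
    exact ⟨s, by rw [← hs]; field_simp; rfl⟩
  obtain ⟨a₀, ha₀⟩ : C (a.coeff m₀)⁻¹ * a ∈ Set.range (map V.subtype) :=
    mem_range_map_iff_coeffs_subset.mpr fun x hx => by
      obtain ⟨m, -, rfl⟩ := mem_coeffs_iff.mp hx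
      exact hcoeff m
  refine ⟨a.coeff m₀, a₀, ?_, ?_, ?_⟩
  · rw [ha₀, ← mul_assoc, ← C_mul, mul_inv_cancel₀ hc, C_1, one_mul]
  · rw [← totalDegree_map_of_injective (f := V.subtype) Subtype.val_injective, ha₀]
    exact (totalDegree_mul _ _).trans (by rw [totalDegree_C, zero_add])
  · have h1 := congrArg (coeff m₀) ha₀
    rw [coeff_map, coeff_C_mul, inv_mul_cancel₀ hc,
      map_eq_one_iff V.subtype Subtype.val_injective] at h1
    exact ne_zero_iff.mpr ⟨m₀, by rw [coeff_map, h1, map_one]; exact one_ne_zero⟩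

theorem exists_residue_factorization {F : MvPolynomial σ V} {a b : MvPolynomial σ K}
    (ha : a ≠ 0) (hb : b ≠ 0) (h : map V.subtype F = a * b) :
    ∃ α β : MvPolynomial σ (ResidueField V), map (residue V) F = α * β ∧
      α.totalDegree ≤ a.totalDegree ∧ β.totalDegree ≤ b.totalDegree := by
  obtain ⟨c, a₀, rfl, ha₀, ha₀'⟩ := V.exists_eq_C_mul_map_subtype ha
  obtain ⟨e, b₀, rfl, hb₀, hb₀'⟩ := V.exists_eq_C_mul_map_subtype hb
  obtain ⟨t, rfl⟩ := exists_eq_C_mul_of_map_eq_C_mul Subtype.val_injective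
    (G := a₀ * b₀) (c := c * e) (by rw [map_mul]; exact mul_ne_zero ha₀' hb₀')
    (by rw [h, map_mul, map_mul]; ring)
  refine ⟨C (residue V t) * map (residue V) a₀, map (residue V) b₀,
    by rw [map_mul, map_mul, map_C, mul_assoc], ?_, (totalDegree_map_le _ _).trans hb₀⟩
  refine (totalDegree_mul _ _).trans ?_
  rw [totalDegree_C, zero_add]
  exact (totalDegree_map_le _ _).trans ha₀

end ValuationSubring

section Descent

universe v

variable {σ K : Type*} {κ : Type v} [Field K] [Field κ] [Algebra K κ]

theorem exists_fg_subalgebra_factorization {f : MvPolynomial σ K} {α β : MvPolynomial σ κ}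
    (h : map (algebraMap K κ) f = α * β) :
    ∃ R : Subalgebra K κ, R.FG ∧ ∃ α₀ β₀ : MvPolynomial σ R,
      map (algebraMap K R) f = α₀ * β₀ ∧ map (R.val : R →+* κ) α₀ = α ∧
        map (R.val : R →+* κ) β₀ = β := by
  classical
  let R := Algebra.adjoin K ((α.coeffs ∪ β.coeffs : Finset κ) : Set κ)
  have hlift {γ : MvPolynomial σ κ} (hγ : γ.coeffs ⊆ α.coeffs ∪ β.coeffs) :
      γ ∈ Set.range (map (R.val : R →+* κ)) :=
    mem_range_map_iff_coeffs_subset.mpr fun x hx =>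
      ⟨⟨x, Algebra.subset_adjoin (Finset.mem_coe.mpr (hγ hx))⟩, rfl⟩
  obtain ⟨α₀, hα₀⟩ := hlift Finset.subset_union_left
  obtain ⟨β₀, hβ₀⟩ := hlift Finset.subset_union_right
  refine ⟨R, Subalgebra.fg_adjoin_finset _, α₀, β₀,
    map_injective (R.val : R →+* κ) Subtype.val_injective ?_, hα₀, hβ₀⟩
  rw [map_map, map_mul, hα₀, hβ₀, ← h, AlgHom.comp_algebraMap]

theorem exists_finiteDimensional_factorization {f : MvPolynomial σ K} {α β : MvPolynomial σ κ}
    (h : map (algebraMap K κ) f = α * β) :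
    ∃ (L : Type v) (_ : Field L) (_ : Algebra K L) (_ : FiniteDimensional K L)
      (α' β' : MvPolynomial σ L), map (algebraMap K L) f = α' * β' ∧
        α'.totalDegree ≤ α.totalDegree ∧ β'.totalDegree ≤ β.totalDegree := by
  obtain ⟨R, hR, α₀, β₀, h₀, rfl, rfl⟩ := exists_fg_subalgebra_factorization h
  obtain ⟨M, hM⟩ := Ideal.exists_maximal R
  -- by Zariski's lemma the field `R ⧸ M`, finitely generated over `K`, is finite over `K`
  let _ : Field (R ⧸ M) := Ideal.Quotient.field M
  have : Algebra.FiniteType K R := (Subalgebra.fg_iff_finiteType R).mp hR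
  have : Algebra.FiniteType K (R ⧸ M) :=
    .of_surjective (Ideal.Quotient.mkₐ K M) (Ideal.Quotient.mkₐ_surjective K M)
  have hdeg (γ : MvPolynomial σ R) :
      (map (Ideal.Quotient.mk M) γ).totalDegree ≤ (map (R.val : R →+* κ) γ).totalDegree := by
    rw [totalDegree_map_of_injective (f := (R.val : R →+* κ)) Subtype.val_injective]
    exact totalDegree_map_le _ _
  refine ⟨R ⧸ M, _, _, finite_of_finite_type_of_isJacobsonRing K _,
    map (Ideal.Quotient.mk M) α₀, map (Ideal.Quotient.mk M) β₀, ?_, hdeg α₀, hdeg β₀⟩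
  rw [← map_mul, ← h₀, map_map, ← Ideal.Quotient.algebraMap_eq,
    ← IsScalarTower.algebraMap_eq]

end Descent

theorem exists_reduceTo_eq_mul_of_le {A : Type u} [CommRing A] {n : ℕ}
    {g : MvPolynomial (Fin n) A} {p P : Ideal A} [p.IsPrime] [P.IsPrime] (hpP : p ≤ P)
    {L : Type u} [Field L] [Algebra (FractionRing (A ⧸ p)) L] {a b : MvPolynomial (Fin n) L}
    (ha : a ≠ 0) (hb : b ≠ 0) (hab : reduceTo p L g = a * b) :
    ∃ (L' : Type u) (_ : Field L') (_ : Algebra (FractionRing (A ⧸ P)) L')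
      (_ : FiniteDimensional (FractionRing (A ⧸ P)) L') (α β : MvPolynomial (Fin n) L'),
      reduceTo P L' g = α * β ∧
        α.totalDegree ≤ a.totalDegree ∧ β.totalDegree ≤ b.totalDegree := by
  obtain ⟨V, φ, hφ, hVker⟩ := exists_valuationSubring_ker_residue_eq (reduceHom p L) P
    (by rwa [ker_reduceHom])
  obtain ⟨ω, hω⟩ := exists_comp_reduceHom_eq P _ hVker
  obtain ⟨α, β, hαβ, hα, hβ⟩ := V.exists_residue_factorization (F := map φ g) ha hb
    (by rw [map_map, hφ, ← hab, reduceTo_eq_map])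
  let _ := ω.toAlgebra
  obtain ⟨L', _, _, _, α', β', h', hα', hβ'⟩ := exists_finiteDimensional_factorization
    (f := reduceTo P (FractionRing (A ⧸ P)) g) (α := α) (β := β)
    (by rw [← hαβ, map_map, ← hω, reduceTo_eq_map, map_map, RingHom.algebraMap_toAlgebra])
  exact ⟨L', _, _, inferInstance, α', β', by rw [reduceTo_eq_map_reduceTo, h'],
    hα'.trans hα, hβ'.trans hβ⟩

theorem reducibility_specializes_general {A : Type u} [CommRing A]
    {n : ℕ} (g : MvPolynomial (Fin n) A) (d : ℕ) (hd : g.totalDegree = d)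
    (p P : Ideal A) [p.IsPrime] [P.IsPrime] (hpP : p ≤ P)
    (h : (reduceTo p (FractionRing (A ⧸ p)) g).totalDegree < d ∨
      ∃ (L : Type u) (_ : Field L) (_ : Algebra (FractionRing (A ⧸ p)) L)
        (_ : FiniteDimensional (FractionRing (A ⧸ p)) L),
        MvPolyReducible (reduceTo p L g)) :
    (reduceTo P (FractionRing (A ⧸ P)) g).totalDegree < d ∨
      ∃ (L : Type u) (_ : Field L) (_ : Algebra (FractionRing (A ⧸ P)) L)
        (_ : FiniteDimensional (FractionRing (A ⧸ P)) L),
        MvPolyReducible (reduceTo P L g) := by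
  have hker {L : Type u} [Field L] [Algebra (FractionRing (A ⧸ p)) L] :
      RingHom.ker (reduceHom p L) ≤ RingHom.ker (reduceHom P (FractionRing (A ⧸ P))) := by
    rwa [ker_reduceHom, ker_reduceHom]
  rcases h with hlt | ⟨L, _, _, _, a, b, hab, ha, hb⟩
  · exact Or.inl ((totalDegree_map_le_of_ker_le hker g).trans_lt hlt)
  refine or_iff_not_imp_left.mpr fun hge => ?_
  rw [not_lt] at hge
  by_cases hq : reduceTo P (FractionRing (A ⧸ P)) g = 0
  · exact ⟨_, _, Algebra.id _, inferInstance, hq ▸ mvPolyReducible_zero⟩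
  have hab0 : a * b ≠ 0 := hab ▸ mt (map_eq_zero_of_ker_le hker) hq
  have ha0 := left_ne_zero_of_mul hab0
  have hb0 := right_ne_zero_of_mul hab0
  obtain ⟨L', _, _, _, α, β, hαβ, hα, hβ⟩ := exists_reduceTo_eq_mul_of_le hpP ha0 hb0 hab
  have hdeg : a.totalDegree + b.totalDegree ≤ (reduceTo P L' g).totalDegree :=
    calc a.totalDegree + b.totalDegree = (reduceTo p L g).totalDegree := by
          rw [hab, totalDegree_mul_of_isDomain ha0 hb0]
      _ ≤ d := hd ▸ totalDegree_map_le _ g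
      _ ≤ (reduceTo P (FractionRing (A ⧸ P)) g).totalDegree := hge
      _ = (reduceTo P L' g).totalDegree := by
          rw [reduceTo_eq_map_reduceTo P L',
            totalDegree_map_of_injective (FaithfulSMul.algebraMap_injective _ L')]
  exact ⟨L', _, _, inferInstance, mvPolyReducible_of_eq_mul hαβ hα hβ hdeg
    (totalDegree_pos_of_not_isUnit ha0 ha) (totalDegree_pos_of_not_isUnit hb0 hb)⟩

/-- Claim 1: specialization behaviour of reducibility. If `𝔭 ⊆ 𝔓` are primes of a
Noetherian ring `A` and the image of `g` in `Q(A/𝔭)[x]` has total degree `< d` or is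
reducible over a finite extension of `Q(A/𝔭)`, then the image of `g` in `Q(A/𝔓)[x]`
has total degree `< d` or is reducible over a finite extension of `Q(A/𝔓)`. -/
theorem reducibility_specializes {A : Type u} [CommRing A] [IsNoetherianRing A]
    {n : ℕ} (g : MvPolynomial (Fin n) A) (d : ℕ) (hd : g.totalDegree = d)
    (p P : Ideal A) [p.IsPrime] [P.IsPrime] (hpP : p ≤ P)
    (h : (reduceTo p (FractionRing (A ⧸ p)) g).totalDegree < d ∨
      ∃ (L : Type u) (_ : Field L) (_ : Algebra (FractionRing (A ⧸ p)) L)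
        (_ : FiniteDimensional (FractionRing (A ⧸ p)) L),
        MvPolyReducible (reduceTo p L g)) :
    (reduceTo P (FractionRing (A ⧸ P)) g).totalDegree < d ∨
      ∃ (L : Type u) (_ : Field L) (_ : Algebra (FractionRing (A ⧸ P)) L)
        (_ : FiniteDimensional (FractionRing (A ⧸ P)) L),
        MvPolyReducible (reduceTo P L g) :=
  reducibility_specializes_general g d hd p P hpP h
end

section
/- Let M(b_11, b_12) be the symmetric 5×5 matrix whose (1,1) entry is b_11, whose (i,j) entries for |i−j| ≤ 1 and (i,j) ≠ (1,1) are all b_12, and whose remaining entries are 0. Then the polynomial g(λ, b_11) := det(λ·Id_5 + M(b_11, 1)) ∈ ℚ[λ, b_11], obtained by setting b_12 = 1, is irreducible of total degree five over the algebraic closure ℚ̄ of ℚ. -/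
open MvPolynomial

/-- An algebraic closure of `ℚ`. -/
noncomputable abbrev Qbar : Type := AlgebraicClosure ℚ

/-- The symmetric `5×5` matrix `M(b₁₁, b₁₂)` with `(1,1)` entry `b₁₁`, entries `b₁₂` at all
positions `(i,j) ≠ (1,1)` with `|i - j| ≤ 1`, and `0` elsewhere (0-based indices), here
specialized at `b₁₂ = 1` with `b₁₁` the variable `X 1` of `ℚ[λ, b₁₁]`. -/
noncomputable def M7 : Matrix (Fin 5) (Fin 5) (MvPolynomial (Fin 2) ℚ) :=
  Matrix.of fun i j =>
    if i = 0 ∧ j = 0 then X 1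
    else if (i : ℕ) ≤ (j : ℕ) + 1 ∧ (j : ℕ) ≤ (i : ℕ) + 1 then 1 else 0

/-- The polynomial `g(λ, b₁₁) = det(λ·Id₅ + M(b₁₁, 1)) ∈ ℚ[λ, b₁₁]`, where `λ` is the
variable `X 0` and `b₁₁` is the variable `X 1`. -/
noncomputable def g7 : MvPolynomial (Fin 2) ℚ :=
  Matrix.det
    ((X 0 : MvPolynomial (Fin 2) ℚ) • (1 : Matrix (Fin 5) (Fin 5) (MvPolynomial (Fin 2) ℚ)) +
      M7)

/-! Expanding the determinant along its first row shows that `g = A(λ) + b₁₁ · B(λ)` is affine in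
`b₁₁`. In a factorization of a polynomial of degree one in `b₁₁`, one factor is free of `b₁₁` and
hence divides both `A` and `B`; but `A` and `B` are coprime already over `ℚ`, by an explicit Bézout
identity, and coprimality survives any base change. The total degree is that of `λ⁵`, the leading
term of `A`. -/

open scoped Polynomial

namespace MvPolynomial

open Polynomial (toMvPolynomial)

section CommSemiring

variable {R σ : Type*} [CommSemiring R]

theorem _root_.Polynomial.toMvPolynomial_monomial (i : σ) (n : ℕ) (c : R) :
    (Polynomial.monomial n c).toMvPolynomial i = monomial (Finsupp.single i n) c := by
  rw [toMvPolynomial, Polynomial.aeval_monomial, algebraMap_eq, C_mul_X_pow_eq_monomial]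

theorem coeff_single_toMvPolynomial (i : σ) (p : R[X]) (n : ℕ) :
    (p.toMvPolynomial i).coeff (Finsupp.single i n) = p.coeff n := by
  classical
  induction p using Polynomial.induction_on' with
  | add p q hp hq => simp [hp, hq]
  | monomial k c =>
    simp [Polynomial.toMvPolynomial_monomial, coeff_monomial, Polynomial.coeff_monomial,
      (Finsupp.single_injective i).eq_iff]

theorem totalDegree_toMvPolynomial_le (i : σ) (p : R[X]) :
    (p.toMvPolynomial i).totalDegree ≤ p.natDegree := by
  rw [toMvPolynomial, Polynomial.aeval_eq_sum_range]
  refine totalDegree_finsetSum_le fun k hk => ?_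
  rw [smul_eq_C_mul, C_mul_X_pow_eq_monomial]
  refine (totalDegree_monomial_le _ _).trans ?_
  simpa [Nat.lt_succ_iff] using hk

theorem map_toMvPolynomial {S : Type*} [CommSemiring S] (f : R →+* S) (i : σ) (p : R[X]) :
    map f (p.toMvPolynomial i) = (p.map f).toMvPolynomial i := by
  induction p using Polynomial.induction_on' with
  | add p q hp hq => simp [hp, hq]
  | monomial k c => simp [Polynomial.toMvPolynomial_monomial]

theorem vars_toMvPolynomial_subset (i : σ) (p : R[X]) : (p.toMvPolynomial i).vars ⊆ {i} := by
  classical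
  rw [Polynomial.toMvPolynomial_eq_rename_comp]
  refine (vars_rename _ _).trans fun j hj => ?_
  obtain ⟨-, -, rfl⟩ := Finset.mem_image.mp hj
  exact Finset.mem_singleton_self i

end CommSemiring

section CommRing

variable {R σ : Type*} [CommRing R] {i j : σ} {a b : R[X]}

theorem irreducible_toMvPolynomial_mul_X_add_toMvPolynomial [IsDomain R] (hij : i ≠ j)
    (hb : b ≠ 0) (hab : IsCoprime a b) :
    Irreducible (b.toMvPolynomial i * X j + a.toMvPolynomial i) := by
  have hvars : ∀ p : R[X], j ∉ (p.toMvPolynomial i).vars := fun p hj =>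
    hij (Finset.mem_singleton.mp (vars_toMvPolynomial_subset i p hj)).symm
  refine irreducible_mul_X_add _ _ j ?_ (hvars b) (hvars a) ?_
  · exact (map_ne_zero_iff _ (Polynomial.toMvPolynomial_injective i)).mpr hb
  · exact (hab.symm.map (toMvPolynomial (R := R) i).toRingHom).isRelPrime

theorem totalDegree_toMvPolynomial_mul_X_add_toMvPolynomial [Nontrivial R] (hij : i ≠ j)
    (hab : b.natDegree < a.natDegree) :
    (b.toMvPolynomial i * X j + a.toMvPolynomial i).totalDegree = a.natDegree := by
  classical
  refine le_antisymm ?_ ?_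
  · refine (totalDegree_add _ _).trans (max_le ?_ (totalDegree_toMvPolynomial_le i a))
    calc (b.toMvPolynomial i * X j).totalDegree
        ≤ (b.toMvPolynomial i).totalDegree + (X j : MvPolynomial σ R).totalDegree :=
          totalDegree_mul _ _
      _ ≤ b.natDegree + 1 := by
          rw [totalDegree_X]; exact Nat.add_le_add_right (totalDegree_toMvPolynomial_le i b) 1
      _ ≤ a.natDegree := hab
  · have hcoeff : (b.toMvPolynomial i * X j + a.toMvPolynomial i).coeff
        (Finsupp.single i a.natDegree) = a.leadingCoeff := by
      simp [coeff_mul_X', hij.symm, coeff_single_toMvPolynomial]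
    have ha : a.leadingCoeff ≠ 0 := by
      rw [Ne, Polynomial.leadingCoeff_eq_zero]; rintro rfl; simp at hab
    have h := le_totalDegree (mem_support_iff.mpr (hcoeff ▸ ha))
    rwa [Finsupp.sum_single_index rfl] at h

end CommRing

end MvPolynomial

noncomputable def g7A : ℚ[X] :=
  .X ^ 5 + 4 * .X ^ 4 + 2 * .X ^ 3 - 5 * .X ^ 2 - 2 * .X + 1

noncomputable def g7B : ℚ[X] :=
  .X ^ 4 + 4 * .X ^ 3 + 3 * .X ^ 2 - 2 * .X - 1

theorem g7_eq_g7B_mul_X_add_g7A :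
    g7 = g7B.toMvPolynomial 0 * X 1 + g7A.toMvPolynomial 0 := by
  have hM : (X 0 : MvPolynomial (Fin 2) ℚ) • (1 : Matrix (Fin 5) (Fin 5) _) + M7 =
      !![X 0 + X 1, 1, 0, 0, 0; 1, X 0 + 1, 1, 0, 0; 0, 1, X 0 + 1, 1, 0;
         0, 0, 1, X 0 + 1, 1; 0, 0, 0, 1, X 0 + 1] := by
    ext i j
    fin_cases i <;> fin_cases j <;> simp [M7]
  rw [g7, hM]
  simp [Matrix.det_succ_row_zero, Fin.sum_univ_succ, Fin.succAbove, g7A, g7B, map_ofNat]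
  ring

theorem isCoprime_g7A_g7B : IsCoprime g7A g7B :=
  ⟨1 - .X - 3 * .X ^ 2 - .X ^ 3, -3 * .X + 3 * .X ^ 3 + .X ^ 4, by simp only [g7A, g7B]; ring⟩

theorem natDegree_g7A : g7A.natDegree = 5 := by
  unfold g7A; compute_degree!

theorem natDegree_g7B : g7B.natDegree = 4 := by
  unfold g7B; compute_degree!

section BaseChange

variable {K : Type*} [CommRing K] (f : ℚ →+* K)

theorem map_g7 :
    map f g7 = (g7B.map f).toMvPolynomial 0 * X 1 + (g7A.map f).toMvPolynomial 0 := by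
  rw [g7_eq_g7B_mul_X_add_g7A, map_add, map_mul, map_X, map_toMvPolynomial, map_toMvPolynomial]

theorem irreducible_map_g7 [IsDomain K] : Irreducible (map f g7) := by
  rw [map_g7]
  refine irreducible_toMvPolynomial_mul_X_add_toMvPolynomial (by decide) ?_ ?_
  · refine Polynomial.map_ne_zero fun h => ?_
    simpa [h] using natDegree_g7B
  · exact isCoprime_g7A_g7B.map (Polynomial.mapRingHom f)

theorem totalDegree_map_g7 [Nontrivial K] : (map f g7).totalDegree = 5 := by
  have hlt : (g7B.map f).natDegree < (g7A.map f).natDegree := by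
    rw [Polynomial.natDegree_map, Polynomial.natDegree_map, natDegree_g7A, natDegree_g7B]
    decide
  rw [map_g7, totalDegree_toMvPolynomial_mul_X_add_toMvPolynomial (by decide) hlt,
    Polynomial.natDegree_map, natDegree_g7A]

end BaseChange

/-- The polynomial `g(λ, b₁₁) = det(λ·Id₅ + M(b₁₁, 1))` is absolutely irreducible of total
degree five, i.e. irreducible of total degree five over the algebraic closure `ℚ̄`. -/
theorem g7_absolutely_irreducible :
    Irreducible (MvPolynomial.map (algebraMap ℚ Qbar) g7) ∧
      (MvPolynomial.map (algebraMap ℚ Qbar) g7).totalDegree = 5 :=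
  ⟨irreducible_map_g7 _, totalDegree_map_g7 _⟩
end

section
/- Let B be the generic symmetric 5×5 matrix with entries b_ij (1 ≤ i ≤ j ≤ 5). Then det(λ·Id_5 + B), regarded as a polynomial in the 16 variables λ and (b_ij)_{1 ≤ i ≤ j ≤ 5}, is irreducible over the algebraic closure ℚ̄ of ℚ. -/
open MvPolynomial

/-- Index set for the 15 entries `b_ij`, `1 ≤ i ≤ j ≤ 5`, of a generic symmetric
`5×5` matrix (0-based indices). -/
def Sym5 : Type := {p : Fin 5 × Fin 5 // p.1 ≤ p.2}

/-- The 16 variables: `none` is `λ`, `some p` is the entry `b_p`. -/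
def Var16 : Type := Option Sym5

/-- The `(i,j)` entry of the generic symmetric `5×5` matrix, as a variable. -/
noncomputable def bVar (i j : Fin 5) : MvPolynomial Var16 Qbar :=
  if h : i ≤ j then X (some ⟨(i, j), h⟩) else X (some ⟨(j, i), le_of_not_ge h⟩)

/-- `det(λ·Id₅ + B)` as a polynomial in the 16 variables `λ` and `(b_ij)_{1 ≤ i ≤ j ≤ 5}`. -/
noncomputable def detIdGeneric : MvPolynomial Var16 Qbar :=
  Matrix.det
    ((X none : MvPolynomial Var16 Qbar) • (1 : Matrix (Fin 5) (Fin 5) (MvPolynomial Var16 Qbar)) +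
      Matrix.of fun i j => bVar i j)

/-!
Sending `X none` to the polynomial variable `λ`, `det(λ + B)` becomes the characteristic
polynomial of `-B` over `ℚ̄[b_ij]`, which is monic in `λ`; so it is irreducible as soon as some
specialization of the `b_ij` is. Specialize `-B` to the adjacency matrix of the path on five
vertices with a loop of weight `t` at one end. Its characteristic polynomial is `S₅(λ) - t S₄(λ)`,
where `Sₙ` are the rescaled Chebyshev polynomials of the second kind; as a polynomial in `t` it is
linear with coprime coefficients (`S₄² + S₅² - λ S₄ S₅ = 1`), hence irreducible.
-/

open scoped Polynomial

namespace Polynomial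

theorem irreducible_map_C_sub_C_X_mul_map_C {R : Type*} [CommRing R] [IsDomain R] {p q : R[X]}
    (hq : q ≠ 0) (hpq : IsCoprime p q) : Irreducible (p.map C - C X * q.map C) := by
  have hswap : Bivariate.swap (p.map C - C X * q.map C) = C (-q) * X + C p := by
    simp only [map_sub, map_mul, map_neg, Bivariate.swap_map_C, Bivariate.swap_X]
    ring
  rw [← MulEquiv.irreducible_iff Bivariate.swap, hswap]
  exact irreducible_C_mul_X_add_C (neg_ne_zero.2 hq) hpq.symm.neg_left.isRelPrime

end Polynomial

namespace Polynomial.Chebyshev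

variable (R : Type*) [CommRing R]

theorem isCoprime_S_S_add_one (n : ℤ) : IsCoprime (S R n) (S R (n + 1)) :=
  ⟨S R n, S R (n + 1) - X * S R n, by linear_combination S_sq_add_S_sq R n⟩

theorem S_three : S R 3 = X ^ 3 - 2 * X := by
  have h := S_add_two R 1
  norm_num only at h
  rw [h, S_two, S_one]
  ring

theorem S_four : S R 4 = X ^ 4 - 3 * X ^ 2 + 1 := by
  have h := S_add_two R 2
  norm_num only at h
  rw [h, S_three, S_two]
  ring

theorem S_five : S R 5 = X ^ 5 - 4 * X ^ 3 + 3 * X := by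
  have h := S_add_two R 3
  norm_num only at h
  rw [h, S_four, S_three]
  ring

end Polynomial.Chebyshev

open Polynomial.Chebyshev (S S_four S_five map_S isCoprime_S_S_add_one)

section PathMatrixWithLoop

variable {R : Type*} [CommRing R]

def pathMatrixWithLoop (t : R) : Matrix (Fin 5) (Fin 5) R :=
  !![t, 1, 0, 0, 0; 1, 0, 1, 0, 0; 0, 1, 0, 1, 0; 0, 0, 1, 0, 1; 0, 0, 0, 1, 0]

theorem isSymm_pathMatrixWithLoop (t : R) : (pathMatrixWithLoop t).IsSymm := by
  ext i j
  fin_cases i <;> fin_cases j <;> rfl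

theorem charpoly_pathMatrixWithLoop (t : R) :
    (pathMatrixWithLoop t).charpoly = S R 5 - Polynomial.C t * S R 4 := by
  simp [S_five, S_four, Matrix.charpoly, pathMatrixWithLoop, Matrix.det_succ_row_zero,
    Fin.sum_univ_succ, Fin.succAbove]
  ring

theorem irreducible_charpoly_pathMatrixWithLoop_X [IsDomain R] :
    Irreducible (pathMatrixWithLoop (Polynomial.X : R[X])).charpoly := by
  have hS₄ : S R 4 ≠ 0 := by
    rw [S_four]
    exact fun h ↦ by simpa using congrArg (Polynomial.eval 0) h
  rw [charpoly_pathMatrixWithLoop, ← map_S Polynomial.C 5, ← map_S Polynomial.C 4]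
  exact Polynomial.irreducible_map_C_sub_C_X_mul_map_C hS₄ (isCoprime_S_S_add_one R 4).symm

end PathMatrixWithLoop

def Sym5.sort (i j : Fin 5) : Sym5 :=
  ⟨(min i j, max i j), min_le_max⟩

theorem bVar_eq_X_sort (i j : Fin 5) : bVar i j = X (some (Sym5.sort i j)) := by
  unfold bVar Sym5.sort
  split_ifs with h
  · simp only [h, min_eq_left, max_eq_right]
    rfl
  · simp only [le_of_not_ge h, min_eq_right, max_eq_left]
    rfl

section GenericSymmMatrix

variable (R : Type*) [CommRing R]

noncomputable def genericSymmMatrix : Matrix (Fin 5) (Fin 5) (MvPolynomial Sym5 R) :=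
  .of fun i j ↦ X (Sym5.sort i j)

theorem map_aeval_genericSymmMatrix {A : Type*} [CommRing A] [Algebra R A]
    {M : Matrix (Fin 5) (Fin 5) A} (hM : M.IsSymm) :
    (genericSymmMatrix R).map (aeval fun p : Sym5 ↦ M p.1.1 p.1.2) = M := by
  ext i j
  refine (aeval_X _ _).trans ?_
  rcases le_total i j with h | h
  · simp [Sym5.sort, h]
  · simpa [Sym5.sort, h] using hM.apply i j

theorem irreducible_charpoly_neg_genericSymmMatrix [IsDomain R] :
    Irreducible (-genericSymmMatrix R).charpoly := by
  let φ := aeval (R := R) fun p : Sym5 ↦ (-pathMatrixWithLoop (Polynomial.X : R[X])) p.1.1 p.1.2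
  refine (Matrix.charpoly_monic _).irreducible_of_irreducible_map φ.toRingHom _ ?_
  rw [← Matrix.charpoly_map, Matrix.map_neg _ (map_neg _), AlgHom.toRingHom_eq_coe,
    RingHom.coe_coe, map_aeval_genericSymmMatrix R (isSymm_pathMatrixWithLoop _).neg, neg_neg]
  exact irreducible_charpoly_pathMatrixWithLoop_X

end GenericSymmMatrix

theorem MvPolynomial.optionEquivLeft_det_X_none_smul_one_add {R σ n : Type*} [CommRing R]
    [Fintype n] [DecidableEq n] (v : n → n → σ) :
    optionEquivLeft R σ (Matrix.det ((X none : MvPolynomial (Option σ) R) • 1 +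
      .of fun i j ↦ X (some (v i j)))) = (-Matrix.of fun i j ↦ X (v i j)).charpoly := by
  refine (AlgEquiv.map_det _ _).trans (congrArg Matrix.det (Matrix.ext fun i j ↦ ?_))
  by_cases h : i = j <;> simp [h, optionEquivLeft_X_none, optionEquivLeft_X_some]

theorem optionEquivLeft_detIdGeneric :
    optionEquivLeft Qbar Sym5 detIdGeneric = (-genericSymmMatrix Qbar).charpoly := by
  unfold detIdGeneric
  simp only [bVar_eq_X_sort]
  exact optionEquivLeft_det_X_none_smul_one_add Sym5.sort

/-- `det(λ·Id₅ + B)`, regarded as a polynomial in the 16 variables `λ` and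
`(b_ij)_{1 ≤ i ≤ j ≤ 5}`, is irreducible over `ℚ̄`. -/
theorem detIdGeneric_absolutely_irreducible : Irreducible detIdGeneric :=
  (MulEquiv.irreducible_iff (optionEquivLeft Qbar Sym5)).1 <|
    optionEquivLeft_detIdGeneric ▸ irreducible_charpoly_neg_genericSymmMatrix Qbar
end

section
/- Let A be a symmetric 5×5 matrix with rational entries and det(A) ≠ 0, and let B be the generic symmetric 5×5 matrix with entries b_ij (1 ≤ i ≤ j ≤ 5). Then det(λ·A + B), regarded as a polynomial in the 16 variables λ and (b_ij)_{1 ≤ i ≤ j ≤ 5}, is irreducible over the algebraic closure ℚ̄ of ℚ. -/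
/-!
Substituting `b ↦ b + λ a` is an automorphism of the polynomial ring which carries `det B` to
`det (λ A + B)` when `A` is symmetric, so it suffices that the determinant of the generic symmetric
matrix is irreducible. This goes by induction on the size. As a polynomial in the corner variable
the determinant is linear, `b₀₀ · det B' + h`, where `B'` is the generic symmetric matrix of one
size less, prime by induction. Specialising `B` to the permutation matrix of the transposition
`(0 1)` kills `det B'` but gives `h = -1`, so `det B' ∤ h`, and a linear polynomial whose prime
leading coefficient does not divide its constant term is irreducible.
-/

open MvPolynomial

/-- `det(λ·A + B)` as a polynomial in the 16 variables `λ` and `(b_ij)_{1 ≤ i ≤ j ≤ 5}`,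
for a fixed rational matrix `A`. -/
noncomputable def detAGeneric (A : Matrix (Fin 5) (Fin 5) ℚ) : MvPolynomial Var16 Qbar :=
  Matrix.det
    (Matrix.of fun i j =>
      (X none : MvPolynomial Var16 Qbar) * C (algebraMap ℚ Qbar (A i j)) + bVar i j)

open Function

theorem Polynomial.irreducible_C_mul_X_add_C_of_prime {R : Type*} [CommRing R] [IsDomain R]
    {g h : R} (hg : Prime g) (hgh : ¬ g ∣ h) :
    Irreducible (Polynomial.C g * Polynomial.X + Polynomial.C h) :=
  Polynomial.irreducible_of_degree_eq_one_of_isRelPrime_coeff (Polynomial.degree_linear hg.ne_zero)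
    (by simpa using (hg.irreducible.isRelPrime_iff_not_dvd.mpr hgh).symm)

theorem Matrix.det_add_single_zero_zero {R : Type*} [CommRing R] {n : ℕ}
    (M : Matrix (Fin (n + 1)) (Fin (n + 1)) R) (x : R) :
    (M + Matrix.single 0 0 x).det = x * (M.submatrix Fin.succ Fin.succ).det + M.det := by
  have hrows (c : Fin n → Fin (n + 1)) :
      (M + Matrix.single 0 0 x).submatrix Fin.succ c = M.submatrix Fin.succ c := by
    ext i j
    simp [(Fin.succ_ne_zero _).symm]
  rw [Matrix.det_succ_row_zero (M + _), Matrix.det_succ_row_zero M, Fin.sum_univ_succ,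
    Fin.sum_univ_succ]
  simp [hrows, (Fin.succ_ne_zero _).symm]
  ring

theorem Matrix.exists_isSymm_det_ne_zero_det_submatrix_succ_eq_zero {K : Type*} [Field K]
    (n : ℕ) : ∃ P : Matrix (Fin (n + 2)) (Fin (n + 2)) K,
      P.IsSymm ∧ P 0 0 = 0 ∧ P.det ≠ 0 ∧ (P.submatrix Fin.succ Fin.succ).det = 0 := by
  refine ⟨(Equiv.swap 0 1).permMatrix K, ?_, ?_, ?_, ?_⟩
  · rw [Matrix.IsSymm, Matrix.transpose_permMatrix, Equiv.swap_inv]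
  · simp
  · simp [Matrix.det_permutation]
  · refine Matrix.det_eq_zero_of_row_eq_zero 0 fun j => ?_
    simpa using (Fin.succ_ne_zero j).symm

namespace MvPolynomial

noncomputable def genericSymmMatrix (R : Type*) [CommSemiring R] {σ : Type*} {n : ℕ}
    (f : Sym2 (Fin n) → σ) : Matrix (Fin n) (Fin n) (MvPolynomial σ R) :=
  Matrix.of fun i j => X (f s(i, j))

noncomputable def equivPolynomialSubtypeNe (R : Type*) [CommSemiring R] {σ : Type*}
    [DecidableEq σ] (c : σ) :
    MvPolynomial σ R ≃ₐ[R] Polynomial (MvPolynomial {s // s ≠ c} R) :=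
  (renameEquiv R (Equiv.optionSubtypeNe c).symm).trans (optionEquivLeft R _)

section Corner

variable {K : Type*} [Field K] {σ : Type*} {n : ℕ}

theorem exists_map_eval_genericSymmMatrix {f : Sym2 (Fin n) → σ} (hf : Injective f)
    {P : Matrix (Fin n) (Fin n) K} (hP : P.IsSymm) :
    ∃ w : σ → K, (genericSymmMatrix K f).map (eval w) = P := by
  refine ⟨extend f (Sym2.lift ⟨P, fun i j => hP.apply j i⟩) 0, ?_⟩
  ext i j
  simp [genericSymmMatrix, hf.extend_apply]

def minorVars {f : Sym2 (Fin (n + 1)) → σ} (hf : Injective f) :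
    Sym2 (Fin n) → {s // s ≠ f s(0, 0)} :=
  fun z => ⟨f (z.map Fin.succ), hf.ne <| Sym2.ind (fun a b => by simp [Fin.succ_ne_zero]) z⟩

theorem injective_minorVars {f : Sym2 (Fin (n + 1)) → σ} (hf : Injective f) :
    Injective (minorVars hf) := fun _ _ h =>
  Sym2.map.injective (Fin.succ_injective _) (hf (congrArg Subtype.val h))

variable [DecidableEq σ]

variable (K) in
noncomputable def cornerFreeMatrix (f : Sym2 (Fin (n + 1)) → σ) :
    Matrix (Fin (n + 1)) (Fin (n + 1)) (MvPolynomial {s // s ≠ f s(0, 0)} K) :=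
  Matrix.of fun i j => if h : f s(i, j) = f s(0, 0) then 0 else X ⟨f s(i, j), h⟩

theorem cornerFreeMatrix_submatrix_succ {f : Sym2 (Fin (n + 1)) → σ} (hf : Injective f) :
    (cornerFreeMatrix K f).submatrix Fin.succ Fin.succ = genericSymmMatrix K (minorVars hf) := by
  ext i j
  simp [cornerFreeMatrix, genericSymmMatrix, minorVars, hf.ne, Fin.succ_ne_zero]

theorem map_genericSymmMatrix_equivPolynomialSubtypeNe {f : Sym2 (Fin (n + 1)) → σ}
    (hf : Injective f) :
    (genericSymmMatrix K f).map (equivPolynomialSubtypeNe K (f s(0, 0))) =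
      (cornerFreeMatrix K f).map Polynomial.C + Matrix.single 0 0 Polynomial.X := by
  refine Matrix.ext fun i j => ?_
  by_cases h : f s(i, j) = f s(0, 0)
  · obtain ⟨rfl, rfl⟩ : i = 0 ∧ j = 0 := by simpa using hf h
    simp [genericSymmMatrix, equivPolynomialSubtypeNe, cornerFreeMatrix]
  · have hij : ¬ (0 = i ∧ 0 = j) := fun ⟨hi, hj⟩ => h (by rw [← hi, ← hj])
    simp [genericSymmMatrix, equivPolynomialSubtypeNe, cornerFreeMatrix, h, hij]

theorem equivPolynomialSubtypeNe_det_genericSymmMatrix {f : Sym2 (Fin (n + 1)) → σ}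
    (hf : Injective f) :
    equivPolynomialSubtypeNe K (f s(0, 0)) (genericSymmMatrix K f).det =
      Polynomial.C (genericSymmMatrix K (minorVars hf)).det * Polynomial.X +
        Polynomial.C (cornerFreeMatrix K f).det := by
  rw [AlgEquiv.map_det, AlgEquiv.mapMatrix_apply, map_genericSymmMatrix_equivPolynomialSubtypeNe hf,
    Matrix.det_add_single_zero_zero, Matrix.submatrix_map, cornerFreeMatrix_submatrix_succ hf,
    ← RingHom.mapMatrix_apply, ← RingHom.mapMatrix_apply, ← RingHom.map_det, ← RingHom.map_det,
    mul_comm]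

theorem not_dvd_det_cornerFreeMatrix {f : Sym2 (Fin (n + 2)) → σ} (hf : Injective f) :
    ¬ (genericSymmMatrix K (minorVars hf)).det ∣ (cornerFreeMatrix K f).det := by
  obtain ⟨P, hP, hP00, hPdet, hPminor⟩ :=
    Matrix.exists_isSymm_det_ne_zero_det_submatrix_succ_eq_zero (K := K) n
  obtain ⟨w, hw⟩ := exists_map_eval_genericSymmMatrix hf hP
  have hN : (cornerFreeMatrix K f).map (eval (w ∘ Subtype.val)) = P := by
    refine Matrix.ext fun i j => ?_
    by_cases h : f s(i, j) = f s(0, 0)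
    · obtain ⟨rfl, rfl⟩ : i = 0 ∧ j = 0 := by simpa using hf h
      simp [cornerFreeMatrix, hP00]
    · simp [cornerFreeMatrix, h, ← hw, genericSymmMatrix]
  intro hdvd
  have := map_dvd (eval (w ∘ Subtype.val)) hdvd
  rw [RingHom.map_det, RingHom.map_det, RingHom.mapMatrix_apply, RingHom.mapMatrix_apply, hN,
    ← cornerFreeMatrix_submatrix_succ hf, ← Matrix.submatrix_map, hN, hPminor, zero_dvd_iff] at this
  exact hPdet this

end Corner

theorem irreducible_det_genericSymmMatrix {K : Type*} [Field K] :
    ∀ {n : ℕ} {σ : Type*} {f : Sym2 (Fin (n + 1)) → σ}, Injective f →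
      Irreducible (genericSymmMatrix K f).det
  | 0, _, _, _ => by
    rw [Matrix.det_fin_one]
    exact X_prime.irreducible
  | n + 1, σ, f, hf => by
    classical
    let φ := equivPolynomialSubtypeNe K (f s(0, 0))
    rw [← MulEquiv.irreducible_iff φ.toMulEquiv]
    change Irreducible (φ _)
    rw [equivPolynomialSubtypeNe_det_genericSymmMatrix hf]
    exact Polynomial.irreducible_C_mul_X_add_C_of_prime
      (irreducible_det_genericSymmMatrix (injective_minorVars hf)).prime
      (not_dvd_det_cornerFreeMatrix hf)

section Shear

variable {R : Type*} [CommRing R] {τ : Type*}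

noncomputable def shearHom (a : τ → R) :
    MvPolynomial (Option τ) R →ₐ[R] MvPolynomial (Option τ) R :=
  aeval fun o => o.elim (X none) fun t => X (some t) + C (a t) * X none

@[simp]
theorem shearHom_X_none (a : τ → R) : shearHom a (X none) = X none := by
  simp [shearHom]

@[simp]
theorem shearHom_X_some (a : τ → R) (t : τ) :
    shearHom a (X (some t)) = X (some t) + C (a t) * X none := by
  simp [shearHom]

theorem shearHom_comp_shearHom (a b : τ → R) :
    (shearHom a).comp (shearHom b) = shearHom (a + b) := by
  refine algHom_ext fun o => ?_
  cases o <;> simp [map_add]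
  ring

theorem shearHom_zero : shearHom (0 : τ → R) = AlgHom.id R _ :=
  algHom_ext fun o => by cases o <;> simp

noncomputable def shearEquiv (a : τ → R) :
    MvPolynomial (Option τ) R ≃ₐ[R] MvPolynomial (Option τ) R :=
  AlgEquiv.ofAlgHom (shearHom a) (shearHom (-a))
    (by rw [shearHom_comp_shearHom, add_neg_cancel, shearHom_zero])
    (by rw [shearHom_comp_shearHom, neg_add_cancel, shearHom_zero])

theorem shearEquiv_det_genericSymmMatrix {n : ℕ} (e : Sym2 (Fin n) ≃ τ)
    {A : Matrix (Fin n) (Fin n) R} (hA : A.IsSymm) :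
    shearEquiv (Sym2.lift ⟨A, fun i j => hA.apply j i⟩ ∘ e.symm)
        (genericSymmMatrix R (some ∘ e)).det =
      (Matrix.of fun i j => X none * C (A i j) + X (some (e s(i, j)))).det := by
  rw [AlgEquiv.map_det]
  congr 1
  ext i j : 1
  simp [genericSymmMatrix, shearEquiv, mul_comm, add_comm]

end Shear

end MvPolynomial

def sym5Equiv : Sym2 (Fin 5) ≃ Sym5 := Sym2.sortEquiv

theorem bVar_eq_X_sym5Equiv (i j : Fin 5) : bVar i j = X (some (sym5Equiv s(i, j))) := by
  have hsort : (sym5Equiv s(i, j)).1 = (i ⊓ j, i ⊔ j) := rfl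
  unfold bVar
  split_ifs with h
  · exact congrArg (X ∘ some) (Subtype.ext (by simp [hsort, h]))
  · exact congrArg (X ∘ some) (Subtype.ext (by simp [hsort, le_of_not_ge h]))

theorem detAGeneric_absolutely_irreducible_general (A : Matrix (Fin 5) (Fin 5) ℚ)
    (hA : A.IsSymm) : Irreducible (detAGeneric A) := by
  have hinj : Injective (some ∘ sym5Equiv) := (Option.some_injective _).comp sym5Equiv.injective
  have hshear :=
    MvPolynomial.shearEquiv_det_genericSymmMatrix sym5Equiv (hA.map (algebraMap ℚ Qbar))
  have hdet : detAGeneric A =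
      (Matrix.of fun i j => X none * C (A.map (algebraMap ℚ Qbar) i j) +
        X (some (sym5Equiv s(i, j)))).det := by
    simp only [detAGeneric, bVar_eq_X_sym5Equiv, Matrix.map_apply]
    rfl
  rw [hdet.trans hshear.symm]
  exact (MulEquiv.irreducible_iff (MvPolynomial.shearEquiv _).toMulEquiv).mpr
    (MvPolynomial.irreducible_det_genericSymmMatrix hinj)

/-- For a symmetric `5×5` rational matrix `A` with `det A ≠ 0`, the polynomial
`det(λ·A + B)`, regarded as a polynomial in the 16 variables `λ` and
`(b_ij)_{1 ≤ i ≤ j ≤ 5}`, is irreducible over `ℚ̄`. -/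
theorem detAGeneric_absolutely_irreducible (A : Matrix (Fin 5) (Fin 5) ℚ)
    (hA : A.IsSymm) (hdet : A.det ≠ 0) : Irreducible (detAGeneric A) :=
  detAGeneric_absolutely_irreducible_general A hA
end
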